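/- Fix integers 3 ≤ l < r and ρ ∈ [0,1]. Define α^BEC(ρ,η) = max_{(0,x_c,y)∈D(ρ)} [f(0,x_c,y,ρ) − 2η ρ x_c], the maximum being over points of D(ρ) with first coordinate x₀ = 0. If for η = 0 this maximum is achieved only at the point (0,x_c,y) = (0,0,0), then there exists η̃ < 0 such that α^BEC(ρ,η) = 0 for all η > η̃. -/

import Mathlib

open Finset

noncomputable section

/-- Binary entropy in nats, with the convention `0 * log 0 = 0`
(automatic since `Real.log 0 = 0`). -/
def h2 (x : ℝ) : ℝ := -x * Real.log x - (1 - x) * Real.log (1 - x)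

/-- Membership in the domain `D(ρ) ⊆ [0,1]^{2+⌊r/2⌋}`.  The coordinate `y t`
for `t : Fin (r/2)` represents `y_{t+1}`, the fraction of check nodes of
induced degree `2*(t+1)`. -/
def memD (r : ℕ) (ρ x₀ xc : ℝ) (y : Fin (r / 2) → ℝ) : Prop :=
  x₀ ∈ Set.Icc (0 : ℝ) 1 ∧ xc ∈ Set.Icc (0 : ℝ) 1 ∧ (∀ t, y t ∈ Set.Icc (0 : ℝ) 1) ∧
    (∑ t, y t) ≤ 1 ∧
    (∑ t : Fin (r / 2), (2 * ((t : ℕ) + 1) : ℝ) / (r : ℝ) * y t) = (1 - ρ) * x₀ + ρ * xc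

/-- The growth-rate function `f(x₀, x_c, y, ρ)`. -/
def fFun (l r : ℕ) (x₀ xc : ℝ) (y : Fin (r / 2) → ℝ) (ρ : ℝ) : ℝ :=
  -(l : ℝ) * h2 ((1 - ρ) * x₀ + ρ * xc) + (1 - ρ) * h2 x₀ + ρ * h2 xc
    - (l : ℝ) / (r : ℝ) * ((1 - ∑ t, y t) * Real.log (1 - ∑ t, y t))
    - (l : ℝ) / (r : ℝ) * ∑ t, y t * Real.log (y t)
    + (l : ℝ) / (r : ℝ) *
        ∑ t : Fin (r / 2), y t * Real.log (Nat.choose r (2 * ((t : ℕ) + 1)))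

/-- The leading exponent of the loop series for the BEC:
`α^BEC(ρ,η) = max_{(0,x_c,y) ∈ D(ρ)} [f(0,x_c,y,ρ) - 2η ρ x_c]`, the maximum
(formalized as a supremum) running over the points of the compact domain
`D(ρ)` whose first coordinate is `x₀ = 0`. -/
def alphaBEC (l r : ℕ) (ρ η : ℝ) : ℝ :=
  sSup {z : ℝ | ∃ (xc : ℝ) (y : Fin (r / 2) → ℝ), memD r ρ 0 xc y ∧
    z = fFun l r 0 xc y ρ - 2 * η * (ρ * xc)}

/-! Write `s = ρ x_c`. Bounding each entropy term of `f(0, x_c, y, ρ)` by `s` and `s log s`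
gives `f ≤ C s + (l/2 - 1) s log s`; for `l ≥ 3` the last term has slope `-∞` at `s = 0`, so
`f ≤ -C s` for small `s`, and a tilt `-2η s` with `2η > -C` keeps the objective `≤ 0` there.
For `s` bounded away from `0` the slice is compact and `f < 0` by hypothesis, so `f ≤ -m`
uniformly, which absorbs any tilt with `2η > -m` since `s ≤ 1`. -/

open Real

lemma h2_eq_negMulLog (x : ℝ) : h2 x = negMulLog x + negMulLog (1 - x) := by
  simp only [h2, negMulLog]
  ring

lemma continuous_h2 : Continuous h2 := by
  simp only [funext h2_eq_negMulLog]
  fun_prop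

lemma negMulLog_le_h2 {x : ℝ} (hx₀ : 0 ≤ x) (hx₁ : x ≤ 1) : negMulLog x ≤ h2 x := by
  rw [h2_eq_negMulLog]
  linarith [negMulLog_nonneg (sub_nonneg.2 hx₁) (by linarith : 1 - x ≤ 1)]

lemma h2_le_negMulLog_add {x : ℝ} (hx : x ≤ 1) : h2 x ≤ negMulLog x + x := by
  have := self_sub_one_le_mul_log (sub_nonneg.2 hx)
  simp only [h2, negMulLog]
  linarith

lemma sub_add_mul_log_le_mul_log {y s : ℝ} (hy : 0 ≤ y) (hs : 0 < s) :
    y - s + y * log s ≤ y * log y := by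
  rcases hy.eq_or_lt with rfl | hy
  · simpa using hs.le
  have h := self_sub_one_le_mul_log (div_nonneg hy.le hs.le)
  rw [log_div hy.ne' hs.ne', div_sub_one hs.ne', div_mul_eq_mul_div,
    div_le_div_iff_of_pos_right hs] at h
  linarith

lemma log_choose_le (r k : ℕ) : log (r.choose k) ≤ r * log 2 := by
  rcases (r.choose k).eq_zero_or_pos with h | h
  · rw [h, Nat.cast_zero, log_zero]
    positivity
  · rw [← log_pow]
    exact log_le_log (by exact_mod_cast h) (by exact_mod_cast Nat.choose_le_two_pow r k)

lemma IsCompact.exists_pos_forall_le_neg {X : Type*} [TopologicalSpace X] {K : Set X}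
    (hK : IsCompact K) {f : X → ℝ} (hf : ContinuousOn f K) (hneg : ∀ x ∈ K, f x < 0) :
    ∃ m > 0, ∀ x ∈ K, f x ≤ -m := by
  rcases K.eq_empty_or_nonempty with rfl | hne
  · exact ⟨1, one_pos, by simp⟩
  obtain ⟨p, hp, hmax⟩ := hK.exists_isMaxOn hne hf
  exact ⟨-f p, neg_pos.2 (hneg p hp), fun x hx => by simpa using hmax hx⟩

/-- The coefficient `C` in the bound `f(0, x_c, y, ρ) ≤ C s + (l/2 - 1) s log s`, `s = ρ x_c`. -/
def growthConst (l r : ℕ) : ℝ := 1 + l + l * r / 2 * log 2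

lemma growthConst_pos (l r : ℕ) : 0 < growthConst l r := by
  unfold growthConst
  have := log_nonneg one_le_two
  positivity

section Slice

variable {l r : ℕ} {ρ xc : ℝ} {y : Fin (r / 2) → ℝ}

lemma memD_zero : memD r ρ 0 0 0 := by
  simp [memD]

lemma fFun_zero : fFun l r 0 0 0 ρ = 0 := by
  simp [fFun, h2]

lemma isCompact_memD_slice (r : ℕ) (ρ : ℝ) :
    IsCompact {p : ℝ × (Fin (r / 2) → ℝ) | memD r ρ 0 p.1 p.2} := by
  have hclosed : IsClosed ({p : ℝ × (Fin (r / 2) → ℝ) | (∑ t, p.2 t) ≤ 1} ∩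
      {p | ∑ t : Fin (r / 2), (2 * ((t : ℕ) + 1) : ℝ) / r * p.2 t = (1 - ρ) * 0 + ρ * p.1}) :=
    (isClosed_le (by fun_prop) (by fun_prop)).inter (isClosed_eq (by fun_prop) (by fun_prop))
  convert (isCompact_Icc (a := ((0 : ℝ), (0 : Fin (r / 2) → ℝ))) (b := (1, 1))).inter_right
    hclosed using 1
  ext p
  simp only [memD, Set.mem_ofPred_eq, Set.mem_inter_iff, Set.mem_Icc, Prod.le_def, Pi.le_def,
    forall_and, mul_zero, zero_add, Pi.zero_apply, Pi.one_apply, le_refl, zero_le_one, and_true,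
    true_and]
  tauto

lemma continuous_fFun_slice (l r : ℕ) (ρ : ℝ) :
    Continuous fun p : ℝ × (Fin (r / 2) → ℝ) => fFun l r 0 p.1 p.2 ρ := by
  unfold fFun
  have := continuous_h2
  fun_prop

lemma sum_le_of_memD (hr : 0 < r) (hD : memD r ρ 0 xc y) :
    ∑ t, y t ≤ r / 2 * (ρ * xc) := by
  obtain ⟨-, -, hy, -, hsum⟩ := hD
  have hr' : (0 : ℝ) < r := by exact_mod_cast hr
  rw [← zero_add (ρ * xc), ← mul_zero (1 - ρ), ← hsum, mul_sum]
  refine sum_le_sum fun t _ => ?_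
  have hcoef : (r : ℝ) / 2 * ((2 * ((t : ℕ) + 1) : ℝ) / r) = (t : ℕ) + 1 := by field_simp
  rw [← mul_assoc, hcoef]
  nlinarith [(hy t).1, (Nat.cast_nonneg (t : ℕ) : (0 : ℝ) ≤ (t : ℕ))]

lemma eq_zero_of_memD_of_mul_eq_zero (hr : 0 < r) (hD : memD r ρ 0 xc y) (hs : ρ * xc = 0) :
    y = 0 := by
  have hY := sum_le_of_memD hr hD
  rw [hs, mul_zero] at hY
  funext t
  exact (sum_eq_zero_iff_of_nonneg fun t _ => (hD.2.2.1 t).1).1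
    (hY.antisymm (sum_nonneg fun t _ => (hD.2.2.1 t).1)) t (mem_univ t)

lemma fFun_eq_zero_of_mul_eq_zero (hr : 0 < r) (hD : memD r ρ 0 xc y) (hs : ρ * xc = 0) :
    fFun l r 0 xc y ρ = 0 := by
  obtain rfl := eq_zero_of_memD_of_mul_eq_zero hr hD hs
  rcases mul_eq_zero.1 hs with rfl | rfl <;> simp [fFun, h2]

lemma sum_mul_log_ge_of_memD (hr : 0 < r) (hD : memD r ρ 0 xc y) (hs₀ : 0 < ρ * xc)
    (hs₁ : ρ * xc ≤ 1) :
    r / 2 * (ρ * xc * log (ρ * xc) - ρ * xc) ≤ ∑ t, y t * log (y t) := by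
  have hY := sum_le_of_memD hr hD
  have hY₀ : 0 ≤ ∑ t, y t := sum_nonneg fun t _ => (hD.2.2.1 t).1
  have hlog : log (ρ * xc) ≤ 0 := log_nonpos hs₀.le hs₁
  have hcard : ((r / 2 : ℕ) : ℝ) ≤ r / 2 := Nat.cast_div_le
  calc r / 2 * (ρ * xc * log (ρ * xc) - ρ * xc)
      ≤ ∑ t, y t - (r / 2 : ℕ) * (ρ * xc) + (∑ t, y t) * log (ρ * xc) := by
        nlinarith [mul_le_mul_of_nonpos_right hY hlog]
    _ = ∑ t, (y t - ρ * xc + y t * log (ρ * xc)) := by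
        simp only [sum_add_distrib, sum_sub_distrib, sum_mul, sum_const, card_univ,
          Fintype.card_fin, nsmul_eq_mul]
    _ ≤ ∑ t, y t * log (y t) :=
        sum_le_sum fun t _ => sub_add_mul_log_le_mul_log (hD.2.2.1 t).1 hs₀

lemma sum_mul_log_choose_le (hy : ∀ t, 0 ≤ y t) :
    ∑ t : Fin (r / 2), y t * log (r.choose (2 * ((t : ℕ) + 1))) ≤ r * log 2 * ∑ t, y t := by
  rw [mul_sum]
  exact sum_le_sum fun t _ => by
    rw [mul_comm (_ * _)]
    exact mul_le_mul_of_nonneg_left (log_choose_le r _) (hy t)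

lemma fFun_le_of_memD (hr : 0 < r) (hρ₀ : 0 ≤ ρ) (hρ₁ : ρ ≤ 1) (hD : memD r ρ 0 xc y)
    (hs : 0 < ρ * xc) :
    fFun l r 0 xc y ρ ≤
      growthConst l r * (ρ * xc) + ((l : ℝ) / 2 - 1) * (ρ * xc * log (ρ * xc)) := by
  obtain ⟨-, ⟨hxc₀, hxc₁⟩, hy, hY₁, -⟩ := id hD
  have hs₁ : ρ * xc ≤ 1 := mul_le_one₀ hρ₁ hxc₀ hxc₁
  have hsxc : ρ * xc ≤ xc := mul_le_of_le_one_left hxc₀ hρ₁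
  have hr' : (0 : ℝ) < r := by exact_mod_cast hr
  have hcross : -(l : ℝ) * h2 (ρ * xc) ≤ l * (ρ * xc * log (ρ * xc)) := by
    have := mul_le_mul_of_nonneg_left (negMulLog_le_h2 hs.le hs₁) (Nat.cast_nonneg l)
    simp only [negMulLog] at this
    linarith
  have hcut : ρ * h2 xc ≤ ρ * xc - ρ * xc * log (ρ * xc) :=
    calc ρ * h2 xc ≤ ρ * (negMulLog xc + xc) :=
          mul_le_mul_of_nonneg_left (h2_le_negMulLog_add hxc₁) hρ₀
      _ = ρ * xc - ρ * xc * log xc := by simp only [negMulLog]; ring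
      _ ≤ ρ * xc - ρ * xc * log (ρ * xc) := by gcongr
  have hdeg : r * log 2 * ∑ t, y t ≤ r * log 2 * (r / 2 * (ρ * xc)) :=
    mul_le_mul_of_nonneg_left (sum_le_of_memD hr hD) (by positivity)
  have hcheck : -((1 - ∑ t, y t) * log (1 - ∑ t, y t)) - ∑ t, y t * log (y t)
      + ∑ t : Fin (r / 2), y t * log (r.choose (2 * ((t : ℕ) + 1)))
      ≤ r / 2 * (2 * (ρ * xc) + r * log 2 * (ρ * xc) - ρ * xc * log (ρ * xc)) := by
    linarith [self_sub_one_le_mul_log (sub_nonneg.2 hY₁), sum_le_of_memD hr hD,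
      sum_mul_log_ge_of_memD hr hD hs hs₁, sum_mul_log_choose_le (fun t => (hy t).1) (r := r)]
  have hcheck' := mul_le_mul_of_nonneg_left hcheck (by positivity : (0 : ℝ) ≤ l / r)
  have hscale : (l : ℝ) / r * (r / 2) = l / 2 := by field_simp
  rw [← mul_assoc, hscale] at hcheck'
  have h2_zero : h2 0 = 0 := by simp [h2]
  simp only [fFun, mul_zero, zero_add, h2_zero, growthConst]
  linarith

lemma fFun_le_neg_mul_of_le_exp (hl : 3 ≤ l) (hr : 0 < r) (hρ₀ : 0 ≤ ρ) (hρ₁ : ρ ≤ 1)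
    (hD : memD r ρ 0 xc y) (hs : ρ * xc ≤ exp (-(4 * growthConst l r))) :
    fFun l r 0 xc y ρ ≤ -growthConst l r * (ρ * xc) := by
  rcases (mul_nonneg hρ₀ hD.2.1.1).eq_or_lt with hs₀ | hs₀
  · rw [fFun_eq_zero_of_mul_eq_zero hr hD hs₀.symm, ← hs₀, mul_zero]
  have hlog : log (ρ * xc) ≤ -(4 * growthConst l r) := by
    simpa using log_le_log hs₀ hs
  have hl' : (3 : ℝ) ≤ l := by exact_mod_cast hl
  have := growthConst_pos l r
  nlinarith [fFun_le_of_memD hr hρ₀ hρ₁ hD hs₀ (l := l), mul_le_mul_of_nonneg_left hlog hs₀.le,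
    mul_le_mul_of_nonneg_left hl' hs₀.le]

end Slice

lemma alphaBEC_eq_zero_of_forall_le {l r : ℕ} {ρ η : ℝ}
    (h : ∀ xc y, memD r ρ 0 xc y → fFun l r 0 xc y ρ - 2 * η * (ρ * xc) ≤ 0) :
    alphaBEC l r ρ η = 0 := by
  refine IsGreatest.csSup_eq ⟨⟨0, 0, memD_zero, by rw [fFun_zero]; ring⟩, ?_⟩
  rintro z ⟨xc, y, hD, rfl⟩
  exact h xc y hD

/-- **Lemma 1 (BEC case).**  If for `η = 0` the maximum of the loop-series
exponent over the slice `{(0,x_c,y) ∈ D(ρ)}` is achieved only at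
`(0, x_c, y) = (0,0,0)`, then there exists `η̃ < 0` such that
`α^BEC(ρ,η) = 0` for all `η > η̃`. -/
theorem alphaBEC_eq_zero_near_zero (l r : ℕ) (hl : 3 ≤ l) (hlr : l < r)
    (ρ : ℝ) (hρ : ρ ∈ Set.Icc (0 : ℝ) 1)
    (hmax : ∀ (xc : ℝ) (y : Fin (r / 2) → ℝ), memD r ρ 0 xc y →
      ¬(xc = 0 ∧ y = 0) → fFun l r 0 xc y ρ < fFun l r 0 0 0 ρ) :
    ∃ ηt : ℝ, ηt < 0 ∧ ∀ η : ℝ, ηt < η → alphaBEC l r ρ η = 0 := by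
  obtain ⟨hρ₀, hρ₁⟩ := hρ
  have hr : 0 < r := by omega
  set C := growthConst l r
  set δ := exp (-(4 * C))
  set K := {p : ℝ × (Fin (r / 2) → ℝ) | memD r ρ 0 p.1 p.2} ∩ {p | δ ≤ ρ * p.1}
  have hK : IsCompact K :=
    (isCompact_memD_slice r ρ).inter_right (isClosed_le (by fun_prop) (by fun_prop))
  have hneg : ∀ p ∈ K, fFun l r 0 p.1 p.2 ρ < 0 := by
    rintro ⟨xc, y⟩ ⟨hD, hδ : δ ≤ ρ * xc⟩
    simpa only [fFun_zero] using
      hmax xc y hD fun h => (exp_pos _).not_ge (by simpa [h.1] using hδ)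
  obtain ⟨m, hm, hfar⟩ :=
    hK.exists_pos_forall_le_neg (continuous_fFun_slice l r ρ).continuousOn hneg
  refine ⟨-min C m / 2, by linarith [lt_min (growthConst_pos l r) hm], fun η hη =>
    alphaBEC_eq_zero_of_forall_le fun xc y hD => ?_⟩
  have hs₀ : 0 ≤ ρ * xc := mul_nonneg hρ₀ hD.2.1.1
  have hs₁ : ρ * xc ≤ 1 := mul_le_one₀ hρ₁ hD.2.1.1 hD.2.1.2
  rcases le_or_gt (ρ * xc) δ with hnear | hbig
  · nlinarith [fFun_le_neg_mul_of_le_exp hl hr hρ₀ hρ₁ hD hnear, min_le_left C m]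
  · nlinarith [hfar (xc, y) ⟨hD, hbig.le⟩, min_le_right C m]
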